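/- arXiv:2102.04261 — 3 statements merged into one kernel-verified Lean document; each statement's English description precedes it below -/
import Mathlib

section
/- For the split quadratic étale extension K × K of a field K, the multiplicative transfer of a pair of quadratic forms (q₁, q₂) of the same dimension over K equals the tensor product q₁ ⊗ q₂. -/
open TensorProduct

/-! Projecting the graph of the commutor to its first factor identifies the transfer with
`q₂ ⊗ q₁` on `V₂ ⊗ V₁`, and the commutor itself is an isometry `q₂ ⊗ q₁ ≅ q₁ ⊗ q₂`. -/

namespace LinearMap

variable {R M N : Type*} [Semiring R] [AddCommMonoid M] [AddCommMonoid N]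
  [Module R M] [Module R N]

def graphEquivFst (f : M →ₗ[R] N) : f.graph ≃ₗ[R] M where
  toFun x := x.1.1
  map_add' _ _ := rfl
  map_smul' _ _ := rfl
  invFun m := ⟨(m, f m), (mem_graph_iff f _).2 rfl⟩
  left_inv x := Subtype.ext (Prod.ext rfl ((mem_graph_iff f x.1).1 x.2).symm)
  right_inv _ := rfl

end LinearMap

namespace QuadraticMap

variable {R M N P : Type*} [CommSemiring R] [AddCommMonoid M] [AddCommMonoid N] [AddCommMonoid P]
  [Module R M] [Module R N] [Module R P]

theorem equivalent_comp_fst_comp_graph_subtype (Q : QuadraticMap R M P) (f : M →ₗ[R] N) :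
    (Q.comp ((LinearMap.fst R M N).comp f.graph.subtype)).Equivalent Q :=
  ⟨(isometryEquivOfCompLinearEquiv Q (LinearMap.graphEquivFst f)).symm⟩

end QuadraticMap

/-- For the split quadratic étale extension `K × K` of `K`, a quadratic form over `K × K` is a
pair `(q₁, q₂)` of quadratic forms over `K` of the same dimension, with conjugate form the
swapped pair; the switch-fixed subspace of `ᶦV ⊗ V = (V₂ ⊗ V₁) × (V₁ ⊗ V₂)` is the graph of
the commutor `V₂ ⊗ V₁ ≃ V₁ ⊗ V₂`, and the multiplicative transfer `N_{K×K/K}(q₁, q₂)` is the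
restriction of `ᶦq ⊗ q` (computed via its first component `q₂ ⊗ q₁`) to this subspace. -/
theorem statement1_general {K V₁ V₂ : Type*} [Field K] [Invertible (2 : K)]
    [AddCommGroup V₁] [AddCommGroup V₂] [Module K V₁] [Module K V₂]
    (q₁ : QuadraticForm K V₁) (q₂ : QuadraticForm K V₂) :
    QuadraticMap.Equivalent
      ((q₂.tmul q₁).comp
        ((LinearMap.fst K (V₂ ⊗[K] V₁) (V₁ ⊗[K] V₂)).comp
          (LinearMap.graph (TensorProduct.comm K V₂ V₁).toLinearMap).subtype))
      (q₁.tmul q₂) :=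
  (QuadraticMap.equivalent_comp_fst_comp_graph_subtype _ _).trans
    ⟨QuadraticForm.tensorComm q₂ q₁⟩

/-- For the split quadratic étale extension `K × K` of `K`, a quadratic form over `K × K` is a
pair `(q₁, q₂)` of quadratic forms over `K` of the same dimension, with conjugate form the
swapped pair; the switch-fixed subspace of `ᶦV ⊗ V = (V₂ ⊗ V₁) × (V₁ ⊗ V₂)` is the graph of
the commutor `V₂ ⊗ V₁ ≃ V₁ ⊗ V₂`, and the multiplicative transfer `N_{K×K/K}(q₁, q₂)` is the
restriction of `ᶦq ⊗ q` (computed via its first component `q₂ ⊗ q₁`) to this subspace.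
The statement: this multiplicative transfer is isometric to `q₁ ⊗ q₂`. -/
theorem statement1 {K V₁ V₂ : Type*} [Field K] [Invertible (2 : K)]
    [AddCommGroup V₁] [AddCommGroup V₂] [Module K V₁] [Module K V₂]
    [FiniteDimensional K V₁] [FiniteDimensional K V₂]
    (hdim : Module.finrank K V₁ = Module.finrank K V₂)
    (q₁ : QuadraticForm K V₁) (q₂ : QuadraticForm K V₂) :
    QuadraticMap.Equivalent
      ((q₂.tmul q₁).comp
        ((LinearMap.fst K (V₂ ⊗[K] V₁) (V₁ ⊗[K] V₂)).comp
          (LinearMap.graph (TensorProduct.comm K V₂ V₁).toLinearMap).subtype))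
      (q₁.tmul q₂) :=
  statement1_general q₁ q₂
end

section
/- Let C be an octonion algebra over a field K of characteristic not 2, with norm n and canonical involution. For a, b ∈ C, the endomorphism R_{āb - b̄a} + L_b L_ā - L_a L_b̄ of C equals the map x ↦ 2n(x,a)b - 2n(x,b)a. -/
/-!
Polarizing the multiplicativity of the norm twice gives
`n(xz, yw) + n(xw, yz) = n(x, y) n(z, w)`, from which one gets the adjoint relation
`n(uv, w) = n(v, ū w)` and `ū v + v̄ u = n(u, v) 1`. Pairing against an arbitrary `y`, these turn
`x(āb) + b(āx)` into `n(x, a) b - n(x, b) a + n(a, b) x` by nondegeneracy; subtracting the same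
identity with `a` and `b` exchanged gives the theorem.
-/

open QuadraticMap

namespace CompositionAlgebra

variable {K C : Type*} [CommRing K] [NonAssocRing C] [Module K C] {n : QuadraticForm K C}

theorem eq_of_forall_polar_eq (hnd : (polarBilin n).SeparatingLeft) {u v : C}
    (h : ∀ y, polar n u y = polar n v y) : u = v := by
  rw [← sub_eq_zero]
  refine hnd _ fun y => ?_
  rw [polarBilin_apply_apply, polar_sub_left, h, sub_self]

theorem polar_mul_mul_right (hmul : ∀ x y : C, n (x * y) = n x * n y) (x y z : C) :
    polar n (x * z) (y * z) = polar n x y * n z := by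
  simp only [polar, ← add_mul, hmul]
  ring

theorem polar_mul_mul_add (hmul : ∀ x y : C, n (x * y) = n x * n y) (x y z w : C) :
    polar n (x * z) (y * w) + polar n (x * w) (y * z) = polar n x y * polar n z w := by
  have h := polar_mul_mul_right hmul x y (z + w)
  simp only [mul_add, polar_add_left, polar_add_right, polar_mul_mul_right hmul] at h
  have hzw : n (z + w) = n z + n w + polar n z w := by
    simp only [polar]
    ring
  rw [hzw] at h
  linear_combination h

theorem polar_one_one (hone : n 1 = 1) : polar n (1 : C) 1 = 2 := by
  rw [polar_self, hone, two_smul, one_add_one_eq_two]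

variable (n) in
def conj (x : C) : C := polar n x 1 • 1 - x

theorem conj_conj (hone : n 1 = 1) (u : C) : conj n (conj n u) = u := by
  have h : polar n (conj n u) 1 = polar n u 1 := by
    rw [conj, polar_sub_left, polar_smul_left, polar_one_one hone, smul_eq_mul]
    ring
  rw [conj, h, conj, sub_sub_cancel]

theorem polar_conj_conj (hone : n 1 = 1) (u v : C) :
    polar n (conj n u) (conj n v) = polar n u v := by
  simp only [conj, polar_sub_left, polar_sub_right, polar_smul_left, polar_smul_right,
    polar_one_one hone, smul_eq_mul, polar_comm n 1]
  ring

theorem polar_conj_mul_conj_mul_add (hmul : ∀ x y : C, n (x * y) = n x * n y)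
    (hone : n 1 = 1) (a b x y : C) :
    polar n (conj n a * b) (conj n x * y) + polar n (conj n a * y) (conj n x * b)
      = polar n a x * polar n b y := by
  rw [polar_mul_mul_add hmul, polar_conj_conj hone]

variable [IsScalarTower K C C]

theorem polar_conj_mul (hmul : ∀ x y : C, n (x * y) = n x * n y) (u v w : C) :
    polar n (conj n u * v) w = polar n v (u * w) := by
  have h := polar_mul_mul_add hmul 1 u v w
  rw [one_mul, one_mul] at h
  rw [conj, sub_mul, smul_mul_assoc, one_mul, polar_sub_left, polar_smul_left, smul_eq_mul,
    polar_comm n u 1, polar_comm n (u * v) w]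
  linear_combination -h

theorem polar_mul_left (hmul : ∀ x y : C, n (x * y) = n x * n y) (hone : n 1 = 1)
    (u v w : C) : polar n (u * v) w = polar n v (conj n u * w) := by
  rw [← polar_conj_mul hmul, conj_conj hone]

theorem conj_mul_add_conj_mul (hmul : ∀ x y : C, n (x * y) = n x * n y)
    (hnd : (polarBilin n).SeparatingLeft) (u v : C) :
    conj n u * v + conj n v * u = polar n u v • (1 : C) := by
  refine eq_of_forall_polar_eq hnd fun w => ?_
  have h := polar_mul_mul_add hmul u v 1 w
  rw [mul_one, mul_one] at h
  rw [polar_add_left, polar_conj_mul hmul, polar_conj_mul hmul, polar_smul_left, smul_eq_mul,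
    polar_comm n v (u * w)]
  linear_combination h

theorem mul_conj_mul_add_mul_conj_mul (hmul : ∀ x y : C, n (x * y) = n x * n y)
    (hone : n 1 = 1) (hnd : (polarBilin n).SeparatingLeft) (a b x : C) :
    x * (conj n a * b) + b * (conj n a * x)
      = polar n x a • b - polar n x b • a + polar n a b • x := by
  refine eq_of_forall_polar_eq hnd fun y => ?_
  have hxb : polar n (conj n a * y) (conj n x * b) + polar n (conj n a * y) (conj n b * x)
      = polar n x b * polar n a y := by
    rw [← polar_add_right, conj_mul_add_conj_mul hmul hnd, polar_smul_right, smul_eq_mul,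
      polar_conj_mul hmul, mul_one, polar_comm n y a]
  have hx := polar_conj_mul_conj_mul_add hmul hone a b x y
  have hb := polar_conj_mul_conj_mul_add hmul hone a x b y
  rw [polar_add_left, polar_mul_left hmul hone x, polar_mul_left hmul hone b, polar_add_left,
    polar_sub_left, polar_smul_left, polar_smul_left, polar_smul_left, smul_eq_mul, smul_eq_mul,
    smul_eq_mul, polar_comm n x a]
  linear_combination hx + hb - hxb

end CompositionAlgebra

open CompositionAlgebra in
theorem statement3_general {K C : Type*} [Field K]
    [NonAssocRing C] [Module K C] [IsScalarTower K C C]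
    (n : QuadraticForm K C)
    (hmul : ∀ x y : C, n (x * y) = n x * n y)
    (hone : n 1 = 1)
    (hnd : (QuadraticMap.polarBilin n).Nondegenerate)
    (conj : C → C)
    (hconj : ∀ x : C, conj x = QuadraticMap.polar n x 1 • (1 : C) - x) :
    ∀ a b x : C,
      x * (conj a * b - conj b * a) + b * (conj a * x) - a * (conj b * x)
        = (2 * QuadraticMap.polar n x a) • b - (2 * QuadraticMap.polar n x b) • a := by
  obtain rfl : conj = CompositionAlgebra.conj n := funext hconj
  intro a b x
  have hab := mul_conj_mul_add_mul_conj_mul hmul hone hnd.1 a b x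
  have hba := mul_conj_mul_add_mul_conj_mul hmul hone hnd.1 b a x
  rw [polar_comm n b a] at hba
  rw [mul_sub]
  calc x * (conj n a * b) - x * (conj n b * a) + b * (conj n a * x) - a * (conj n b * x)
      = (x * (conj n a * b) + b * (conj n a * x))
          - (x * (conj n b * a) + a * (conj n b * x)) := by
        abel
    _ = _ := by
        rw [hab, hba, mul_smul, mul_smul, two_smul, two_smul]
        abel

/-- Let `C` be an octonion algebra over a field `K` of characteristic not 2, with
multiplicative nondegenerate norm `n` and canonical involution `x̄ = n(x,1)·1 - x`.
For `a, b ∈ C`, the endomorphism `R_{āb - b̄a} + L_b L_ā - L_a L_b̄` of `C` equals the map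
`x ↦ 2n(x,a)b - 2n(x,b)a`, where `n(x,y)` denotes the polar form. -/
theorem statement3 {K C : Type*} [Field K] (hchar : (2 : K) ≠ 0)
    [NonAssocRing C] [Module K C] [SMulCommClass K C C] [IsScalarTower K C C]
    (hdim : Module.finrank K C = 8)
    (n : QuadraticForm K C)
    (hmul : ∀ x y : C, n (x * y) = n x * n y)
    (hone : n 1 = 1)
    (hnd : (QuadraticMap.polarBilin n).Nondegenerate)
    (conj : C → C)
    (hconj : ∀ x : C, conj x = QuadraticMap.polar n x 1 • (1 : C) - x) :
    ∀ a b x : C,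
      x * (conj a * b - conj b * a) + b * (conj a * x) - a * (conj b * x)
        = (2 * QuadraticMap.polar n x a) • b - (2 * QuadraticMap.polar n x b) • a :=
  statement3_general n hmul hone hnd conj hconj
end

section
/- For a nondegenerate quadratic form q over a field K of characteristic not 2, and u, v, u', v' in the underlying vector space, the commutator identity [[u,v], [u',v']] = -2q(u,u')[v,v'] + 2q(u,v')[v,u'] + 2q(v,u')[u,v'] - 2q(v,v')[u,u'] holds in the Clifford algebra C(q), where [x,y] = xy - yx and q(x,y) denotes the polar form. -/
/-!
By the Jacobi identity, `⁅⁅a, b⁆, X⁆ = ⁅a, ⁅b, X⁆⁆ - ⁅b, ⁅a, X⁆⁆`. For vectors the relation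
`x c + c x = polar Q x c` lets `x` pass through `c d` at the cost of one scalar per factor, so
`⁅x, ⁅c, d⁆⁆ = 2 polar Q x c • d - 2 polar Q x d • c`; applying this twice gives the four terms.
-/

namespace CliffordAlgebra

attribute [local instance] LieRing.ofAssociativeRing

open QuadraticMap

variable {R M : Type*} [CommRing R] [AddCommGroup M] [Module R M] (Q : QuadraticForm R M)

theorem lie_ι_ι_mul_ι (x c d : M) :
    ⁅ι Q x, ι Q c * ι Q d⁆ = polar Q x c • ι Q d - polar Q x d • ι Q c := by
  rw [Algebra.smul_def, Algebra.smul_def, Algebra.commutes (polar Q x d),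
    ← ι_mul_ι_add_swap, ← ι_mul_ι_add_swap, Ring.lie_def]
  noncomm_ring

theorem lie_ι_lie_ι_ι (x c d : M) :
    ⁅ι Q x, ⁅ι Q c, ι Q d⁆⁆ = (2 * polar Q x c) • ι Q d - (2 * polar Q x d) • ι Q c := by
  rw [Ring.lie_def (ι Q c), lie_sub, lie_ι_ι_mul_ι, lie_ι_ι_mul_ι]
  module

theorem lie_lie_ι_ι_lie_ι_ι (u v u' v' : M) :
    ⁅⁅ι Q u, ι Q v⁆, ⁅ι Q u', ι Q v'⁆⁆
      = (-(2 * polar Q u u')) • ⁅ι Q v, ι Q v'⁆ + (2 * polar Q u v') • ⁅ι Q v, ι Q u'⁆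
        + (2 * polar Q v u') • ⁅ι Q u, ι Q v'⁆ + (-(2 * polar Q v v')) • ⁅ι Q u, ι Q u'⁆ := by
  rw [lie_lie, lie_ι_lie_ι_ι, lie_ι_lie_ι_ι]
  simp only [lie_sub, lie_smul (R := R)]
  module

end CliffordAlgebra

theorem statement4_general {K V : Type*} [Field K]
    [AddCommGroup V] [Module K V]
    (Q : QuadraticForm K V)
    (u v u' v' : V) :
    letI ι := (CliffordAlgebra.ι Q)
    letI c : CliffordAlgebra Q → CliffordAlgebra Q → CliffordAlgebra Q :=
      fun x y => x * y - y * x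
    c (c (ι u) (ι v)) (c (ι u') (ι v'))
      = (-(2 * QuadraticMap.polar Q u u')) • c (ι v) (ι v')
        + (2 * QuadraticMap.polar Q u v') • c (ι v) (ι u')
        + (2 * QuadraticMap.polar Q v u') • c (ι u) (ι v')
        + (-(2 * QuadraticMap.polar Q v v')) • c (ι u) (ι u') :=
  CliffordAlgebra.lie_lie_ι_ι_lie_ι_ι Q u v u' v'

/-- In the Clifford algebra of a nondegenerate quadratic space `(V, Q)` over a field of
characteristic not 2, for `u, v, u', v' ∈ V` the commutator identity
`[[u,v],[u',v']] = -2Q(u,u')[v,v'] + 2Q(u,v')[v,u'] + 2Q(v,u')[u,v'] - 2Q(v,v')[u,u']`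
holds, where `[x,y] = xy - yx` and `Q(x,y)` is the polar form of `Q`. -/
theorem statement4 {K V : Type*} [Field K] (hchar : (2 : K) ≠ 0)
    [AddCommGroup V] [Module K V]
    (Q : QuadraticForm K V)
    (hnd : (QuadraticMap.polarBilin Q).Nondegenerate)
    (u v u' v' : V) :
    letI ι := (CliffordAlgebra.ι Q)
    letI c : CliffordAlgebra Q → CliffordAlgebra Q → CliffordAlgebra Q :=
      fun x y => x * y - y * x
    c (c (ι u) (ι v)) (c (ι u') (ι v'))
      = (-(2 * QuadraticMap.polar Q u u')) • c (ι v) (ι v')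
        + (2 * QuadraticMap.polar Q u v') • c (ι v) (ι u')
        + (2 * QuadraticMap.polar Q v u') • c (ι u) (ι v')
        + (-(2 * QuadraticMap.polar Q v v')) • c (ι u) (ι u') :=
  statement4_general Q u v u' v'
end
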